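/- In the Connes–Kreimer Hopf algebra of rooted trees, the coproduct Δ defined by Δ𝟏 = 𝟏⊗𝟏 and Δ[h₁⋯h_n]_r = [h₁⋯h_n]_r ⊗ 𝟏 + (id ⊗ [·]_r)(Δh₁ ⋯ Δh_n) is coassociative: (Δ ⊗ id)∘Δ = (id ⊗ Δ)∘Δ. -/

import Mathlib

/-!
Both sides of coassociativity are algebra morphisms, so the elements on which they agree form a
subalgebra, and it suffices to check trees, by induction on the tree. The recursion says that
grafting `B = [·]_r` is a Hochschild 1-cocycle, `Δ ∘ B = B ⊗ 1 + (id ⊗ B) ∘ Δ`; together with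
`Δ 1 = 1 ⊗ 1`, a direct computation shows that coassociativity on `x` implies it on `B x`, and
every tree is `B` applied to the product of its (smaller) subtrees.
-/

open TensorProduct

/-- Rooted trees decorated by natural numbers: a node together with its list of
subtrees (the forest grafted onto the root). -/
inductive RTree : Type
  | node : ℕ → List RTree → RTree

/-- The Connes–Kreimer algebra: the free (monoid) algebra whose monomials are
forests, i.e. words of rooted trees. -/
noncomputable abbrev CKAlg : Type := MonoidAlgebra ℚ (FreeMonoid RTree)

/-- A rooted tree, viewed as an element of the Connes–Kreimer algebra. -/
noncomputable def treeElem (t : RTree) : CKAlg :=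
  MonoidAlgebra.of ℚ (FreeMonoid RTree) (FreeMonoid.of t)

/-- The grafting operator `[·]_r` : the linear map sending a forest (monomial) to the
tree obtained by attaching a new root decorated by `r`. -/
noncomputable def graft (r : ℕ) : CKAlg →ₗ[ℚ] CKAlg :=
  MonoidAlgebra.mapDomainLinearMap ℚ ℚ fun f : FreeMonoid RTree =>
    FreeMonoid.of (RTree.node r f.toList)

section Coassociativity

variable {R A : Type*} [CommSemiring R]

theorem TensorProduct.assoc_tmul_eq_lTensor {M N P : Type*} [AddCommMonoid M] [AddCommMonoid N]
    [AddCommMonoid P] [Module R M] [Module R N] [Module R P] (z : M ⊗[R] N) (p : P) :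
    TensorProduct.assoc R M N P (z ⊗ₜ p) = ((mk R N P).flip p).lTensor M z := by
  induction z using TensorProduct.induction_on with
  | zero => simp
  | tmul m n => rfl
  | add z w hz hw => simp only [add_tmul, map_add, hz, hw]

theorem TensorProduct.assoc_lTensor {M N P Q : Type*} [AddCommMonoid M] [AddCommMonoid N]
    [AddCommMonoid P] [AddCommMonoid Q] [Module R M] [Module R N] [Module R P] [Module R Q]
    (f : P →ₗ[R] Q) (w : (M ⊗[R] N) ⊗[R] P) :
    TensorProduct.assoc R M N Q (f.lTensor (M ⊗[R] N) w)
      = (f.lTensor N).lTensor M (TensorProduct.assoc R M N P w) := by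
  simpa [LinearMap.lTensor, TensorProduct.map_id] using
    (map_map_assoc LinearMap.id LinearMap.id f w).symm

theorem coassoc_apply_of_cocycle [AddCommMonoid A] [Module R A] {Δ : A →ₗ[R] A ⊗[R] A}
    {B : A →ₗ[R] A} {u : A}
    (hu : Δ u = u ⊗ₜ u) (hB : ∀ x, Δ (B x) = B x ⊗ₜ u + B.lTensor A (Δ x)) {x : A}
    (hx : TensorProduct.assoc R A A A (Δ.rTensor A (Δ x)) = Δ.lTensor A (Δ x)) :
    TensorProduct.assoc R A A A (Δ.rTensor A (Δ (B x))) = Δ.lTensor A (Δ (B x)) := by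
  have hΔB : Δ ∘ₗ B = (mk R A A).flip u ∘ₗ B + B.lTensor A ∘ₗ Δ := LinearMap.ext hB
  calc TensorProduct.assoc R A A A (Δ.rTensor A (Δ (B x)))
      = ((mk R A A).flip u).lTensor A (Δ (B x))
        + TensorProduct.assoc R A A A (B.lTensor (A ⊗[R] A) (Δ.rTensor A (Δ x))) := by
        rw [hB, map_add, map_add, LinearMap.rTensor_tmul, assoc_tmul_eq_lTensor, ← hB,
          ← LinearMap.comp_apply (Δ.rTensor A), LinearMap.rTensor_comp_lTensor,
          ← LinearMap.lTensor_comp_rTensor]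
        rfl
    _ = B x ⊗ₜ (u ⊗ₜ u) + ((mk R A A).flip u ∘ₗ B + B.lTensor A ∘ₗ Δ).lTensor A (Δ x) := by
        rw [assoc_lTensor, hx, hB, map_add, LinearMap.lTensor_tmul, LinearMap.lTensor_add,
          LinearMap.add_apply, add_assoc, LinearMap.lTensor_comp_apply,
          LinearMap.lTensor_comp_apply]
        rfl
    _ = Δ.lTensor A (Δ (B x)) := by
        rw [← hΔB, hB, map_add, LinearMap.lTensor_tmul, hu, LinearMap.lTensor_comp_apply]

variable [Semiring A] [Algebra R A]

def coassocSubalgebra (Δ : A →ₐ[R] A ⊗[R] A) : Subalgebra R A :=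
  AlgHom.equalizer
    ((Algebra.TensorProduct.assoc R R R A A A).toAlgHom.comp
      ((Algebra.TensorProduct.map Δ (AlgHom.id R A)).comp Δ))
    ((Algebra.TensorProduct.map (AlgHom.id R A) Δ).comp Δ)

theorem mem_coassocSubalgebra {Δ : A →ₐ[R] A ⊗[R] A} {x : A} :
    x ∈ coassocSubalgebra Δ ↔ TensorProduct.assoc R A A A (Δ.toLinearMap.rTensor A (Δ x))
      = Δ.toLinearMap.lTensor A (Δ x) := Iff.rfl

end Coassociativity

def IsCKCoproduct (Δ : CKAlg →ₐ[ℚ] CKAlg ⊗[ℚ] CKAlg) : Prop :=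
  ∀ (r : ℕ) (f : List RTree),
    Δ (treeElem (RTree.node r f))
      = treeElem (RTree.node r f) ⊗ₜ[ℚ] (1 : CKAlg)
        + TensorProduct.map LinearMap.id (graft r) ((f.map fun h => Δ (treeElem h)).prod)

theorem of_ofList_eq_prod_treeElem (f : List RTree) :
    MonoidAlgebra.of ℚ (FreeMonoid RTree) (FreeMonoid.ofList f) = (f.map treeElem).prod := by
  have hof : MonoidAlgebra.of ℚ (FreeMonoid RTree) = FreeMonoid.lift treeElem :=
    FreeMonoid.hom_eq fun _ => rfl
  rw [hof, FreeMonoid.lift_ofList]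

theorem graft_of (r : ℕ) (f : FreeMonoid RTree) :
    graft r (MonoidAlgebra.of ℚ (FreeMonoid RTree) f) = treeElem (RTree.node r f.toList) :=
  MonoidAlgebra.mapDomainLinearMap_single ..

theorem treeElem_node (r : ℕ) (f : List RTree) :
    treeElem (RTree.node r f) = graft r (f.map treeElem).prod := by
  rw [← of_ofList_eq_prod_treeElem, graft_of, FreeMonoid.toList_ofList]

theorem IsCKCoproduct.apply_graft {Δ : CKAlg →ₐ[ℚ] CKAlg ⊗[ℚ] CKAlg} (hΔ : IsCKCoproduct Δ)
    (r : ℕ) (x : CKAlg) :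
    Δ (graft r x) = graft r x ⊗ₜ 1 + (graft r).lTensor CKAlg (Δ x) := by
  suffices Δ.toLinearMap ∘ₗ graft r
      = (mk ℚ CKAlg CKAlg).flip 1 ∘ₗ graft r + (graft r).lTensor CKAlg ∘ₗ Δ.toLinearMap from
    LinearMap.congr_fun this x
  refine MonoidAlgebra.lhom_ext' fun f => LinearMap.ext_ring ?_
  have hof : MonoidAlgebra.of ℚ (FreeMonoid RTree) f = (f.toList.map treeElem).prod :=
    of_ofList_eq_prod_treeElem f.toList
  simp only [LinearMap.comp_apply, LinearMap.add_apply, AlgHom.toLinearMap_apply,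
    MonoidAlgebra.lsingle_apply]
  rw [← MonoidAlgebra.of_apply, graft_of, hΔ, hof, map_list_prod Δ, List.map_map]
  rfl

theorem IsCKCoproduct.treeElem_mem_coassocSubalgebra {Δ : CKAlg →ₐ[ℚ] CKAlg ⊗[ℚ] CKAlg}
    (hΔ : IsCKCoproduct Δ) : ∀ t : RTree, treeElem t ∈ coassocSubalgebra Δ
  | .node r f => by
    have hf : (f.map treeElem).prod ∈ coassocSubalgebra Δ :=
      Subalgebra.list_prod_mem _ (List.forall_mem_map.2 fun t _ =>
        hΔ.treeElem_mem_coassocSubalgebra t)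
    rw [treeElem_node]
    exact coassoc_apply_of_cocycle (map_one Δ) (hΔ.apply_graft r) hf

theorem eq_top_of_treeElem_mem {S : Subalgebra ℚ CKAlg} (hS : ∀ t, treeElem t ∈ S) : S = ⊤ := by
  refine eq_top_iff.2 fun x _ => Algebra.adjoin_le ?_ (MonoidAlgebra.mem_adjoin_support x)
  rintro _ ⟨f, -, rfl⟩
  rw [← FreeMonoid.ofList_toList f, of_ofList_eq_prod_treeElem]
  exact Subalgebra.list_prod_mem _ (List.forall_mem_map.2 fun t _ => hS t)

/-- the Connes–Kreimer coproduct `Δ`, i.e. the algebra morphism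
determined by `Δ𝟏 = 𝟏 ⊗ 𝟏` (automatic) and the recursion
`Δ[h₁⋯h_n]_r = [h₁⋯h_n]_r ⊗ 𝟏 + (id ⊗ [·]_r)(Δh₁ ⋯ Δh_n)`, is coassociative:
`(Δ ⊗ id) ∘ Δ = (id ⊗ Δ) ∘ Δ`. -/
theorem stmt9 (Δ : CKAlg →ₐ[ℚ] TensorProduct ℚ CKAlg CKAlg)
    (hΔ : ∀ (r : ℕ) (f : List RTree),
      Δ (treeElem (RTree.node r f))
        = treeElem (RTree.node r f) ⊗ₜ[ℚ] (1 : CKAlg)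
          + TensorProduct.map LinearMap.id (graft r)
              ((f.map fun h => Δ (treeElem h)).prod)) :
    ∀ x : CKAlg,
      (TensorProduct.assoc ℚ CKAlg CKAlg CKAlg)
          ((TensorProduct.map Δ.toLinearMap LinearMap.id) (Δ x))
        = (TensorProduct.map LinearMap.id Δ.toLinearMap) (Δ x) := by
  have htop : coassocSubalgebra Δ = ⊤ :=
    eq_top_of_treeElem_mem (IsCKCoproduct.treeElem_mem_coassocSubalgebra hΔ)
  exact fun x => mem_coassocSubalgebra.1 (htop ▸ Algebra.mem_top)
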